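/- arXiv:1705.11074 — 2 statements merged into one kernel-verified Lean document; each statement's English description precedes it below -/
import Mathlib

section
/- Consider the noisy saddle with parameters a₁, a₂ > 0 and b₁, b₂ ∈ ℝ, driven by paths w¹, w² of linear growth, and let Φ(t, (x,y)) = ( φ_{a₁,b₁}(t, w¹, x), ψ_{a₂,b₂}(t, w², y) ) denote the joint pathwise solution operator. Then the stable and unstable manifolds of the stationary orbit are invariant: for every t ∈ ℝ, Φ(t, ·) maps 𝒮(w) = { (x, y) ∈ ℝ² : x = x̃_{a₁,b₁}(w¹) } bijectively onto 𝒮(θ_t w) = { (x, y) : x = x̃_{a₁,b₁}(θ_t w¹) }, and maps 𝒰(w) = { (x, y) : y = ỹ_{a₂,b₂}(w²) } bijectively onto 𝒰(θ_t w) = { (x, y) : y = ỹ_{a₂,b₂}(θ_t w²) }. -/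
open MeasureTheory Filter Topology

/-- The pathwise solution operator `φ_{a,b}` of the expanding component `dX = aX dt + b dW`. -/
noncomputable def phiSol (a b t : ℝ) (w : ℝ → ℝ) (x : ℝ) : ℝ :=
  Real.exp (a * t) * x + b * w t +
    a * b * Real.exp (a * t) * ∫ s in (0 : ℝ)..t, Real.exp (-a * s) * w s

/-- The pathwise solution operator `ψ_{a,b}` of the contracting component `dY = -aY dt + b dW`. -/
noncomputable def psiSol (a b t : ℝ) (w : ℝ → ℝ) (y : ℝ) : ℝ :=
  Real.exp (-a * t) * y + b * w t -
    a * b * Real.exp (-a * t) * ∫ s in (0 : ℝ)..t, Real.exp (a * s) * w s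

/-- The shift `θ_t w` of a path `w`: `(θ_t w)(s) = w(t + s) - w(t)`. -/
def shiftPath (t : ℝ) (w : ℝ → ℝ) : ℝ → ℝ := fun s => w (t + s) - w t

/-- `x̃_{a,b}(w) = -a b ∫₀^∞ e^{-a s} w(s) ds`. -/
noncomputable def xStat (a b : ℝ) (w : ℝ → ℝ) : ℝ :=
  -(a * b) * ∫ s in Set.Ioi (0 : ℝ), Real.exp (-a * s) * w s

/-- `ỹ_{a,b}(w) = -a b ∫_{-∞}^0 e^{a s} w(s) ds`. -/
noncomputable def yStat (a b : ℝ) (w : ℝ → ℝ) : ℝ :=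
  -(a * b) * ∫ s in Set.Iio (0 : ℝ), Real.exp (a * s) * w s

/-!
Both components of the flow are affine bijections of the initial value (with slopes
`e^{± a t}`), so everything reduces to the cocycle identity `φ(t, w, x̃(w)) = x̃(θ_t w)`. It follows
from the substitution `s ↦ t + s` in the improper integral defining `x̃`, the splitting
`∫_0^∞ = ∫_0^t + ∫_t^∞` and `∫_0^∞ e^{-as} ds = 1/a`; linear growth of `w` makes `e^{-as} w(s)`
integrable at `+∞`. The unstable component is the stable one in reversed time:
`ψ_{a,b}(t, w) = φ_{a,b}(-t, w ∘ neg)` and `ỹ_{a,b}(w) = x̃_{a,b}(w ∘ neg)`.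
-/

open Set Function Asymptotics

section ProdMap

variable {α β γ δ : Type*}

lemma bijOn_prodMap_fst_eq {f : α → γ} {g : β → δ} {c : α} {c' : γ} (hc : f c = c')
    (hg : Bijective g) :
    BijOn (fun p : α × β => (f p.1, g p.2)) {p | p.1 = c} {p | p.1 = c'} := by
  have h := (bijOn_singleton.2 hc).prodMap hg.bijOn_univ
  rwa [prod_univ, prod_univ] at h

lemma bijOn_prodMap_snd_eq {f : α → γ} {g : β → δ} {c : β} {c' : δ} (hc : g c = c')
    (hf : Bijective f) :
    BijOn (fun p : α × β => (f p.1, g p.2)) {p | p.2 = c} {p | p.2 = c'} := by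
  have h := hf.bijOn_univ.prodMap (bijOn_singleton.2 hc)
  rwa [univ_prod, univ_prod] at h

end ProdMap

lemma setIntegral_Ioi_comp_add_left {E : Type*} [NormedAddCommGroup E] [NormedSpace ℝ E]
    (f : ℝ → E) (t c : ℝ) : ∫ x in Ioi c, f (t + x) = ∫ x in Ioi (t + c), f x := by
  simpa using (measurePreserving_add_left volume t).setIntegral_preimage_emb
    (measurableEmbedding_addLeft t) f (Ioi (t + c))

lemma MeasureTheory.IntegrableOn.comp_add_left_Ioi {E : Type*} [NormedAddCommGroup E]
    {f : ℝ → E} {t c : ℝ} (hf : IntegrableOn f (Ioi (t + c))) :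
    IntegrableOn (fun x => f (t + x)) (Ioi c) := by
  have h := ((measurePreserving_add_left volume t).integrableOn_comp_preimage
    (measurableEmbedding_addLeft t)).2 hf
  rwa [preimage_const_add_Ioi, add_sub_cancel_left] at h

lemma isBigO_exp_mul_of_abs_le_linear {C b : ℝ} (hb : 0 < b) {w : ℝ → ℝ}
    (hg : ∀ s, |w s| ≤ C * (1 + |s|)) : w =O[atTop] fun s => Real.exp (b * s) := by
  have hlin : w =O[atTop] fun s => 1 + |s| :=
    IsBigO.of_bound C (Eventually.of_forall fun s => by
      simpa [abs_of_nonneg (by positivity : 0 ≤ 1 + |s|)] using hg s)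
  have hpoly : (fun s : ℝ => s ^ 0 + s ^ 1) =o[atTop] fun s => Real.exp (b * s) :=
    (isLittleO_pow_exp_pos_mul_atTop 0 hb).add (isLittleO_pow_exp_pos_mul_atTop 1 hb)
  refine hlin.trans (hpoly.isBigO.congr' ?_ EventuallyEq.rfl)
  filter_upwards [eventually_ge_atTop 0] with s hs
  simp [abs_of_nonneg hs, add_comm]

lemma integrableOn_Ioi_exp_neg_mul_mul {a b : ℝ} (hba : b < a) {w : ℝ → ℝ} (hw : Continuous w)
    (hO : w =O[atTop] fun s => Real.exp (b * s)) (c : ℝ) :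
    IntegrableOn (fun s => Real.exp (-a * s) * w s) (Ioi c) := by
  refine integrable_of_isBigO_exp_neg (sub_pos.2 hba) (by fun_prop) ?_
  refine ((isBigO_refl (fun s => Real.exp (-a * s)) atTop).mul hO).congr_right fun s => ?_
  rw [← Real.exp_add]; ring_nf

lemma phiSol_bijective (a b t : ℝ) (w : ℝ → ℝ) : Bijective (phiSol a b t w) := by
  convert ((Equiv.mulLeft₀ _ (Real.exp_ne_zero (a * t))).trans
    (Equiv.addRight (phiSol a b t w 0))).bijective using 1
  ext x
  simp only [phiSol, Equiv.trans_apply, Equiv.mulLeft₀_apply, Equiv.coe_addRight]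
  ring

lemma phiSol_xStat_eq_xStat_shiftPath {a : ℝ} (ha : 0 < a) (b : ℝ) {w : ℝ → ℝ}
    (hint : ∀ c, IntegrableOn (fun s => Real.exp (-a * s) * w s) (Ioi c)) (t : ℝ) :
    phiSol a b t w (xStat a b w) = xStat a b (shiftPath t w) := by
  set g := fun s => Real.exp (-a * s) * w s
  have hfactor : ∀ s, Real.exp (-a * s) * w (t + s) = Real.exp (a * t) * g (t + s) := fun s => by
    simp only [g, ← mul_assoc, ← Real.exp_add]; ring_nf
  have hshift : ∫ s in Ioi 0, Real.exp (-a * s) * w (t + s)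
      = Real.exp (a * t) * ∫ s in Ioi t, g s := by
    simp_rw [hfactor, integral_const_mul, setIntegral_Ioi_comp_add_left g t 0, add_zero]
  have hshift_int : IntegrableOn (fun s => Real.exp (-a * s) * w (t + s)) (Ioi 0) := by
    simp_rw [hfactor]
    exact (hint (t + 0)).comp_add_left_Ioi.const_mul _
  have hkernel : ∫ s in Ioi (0 : ℝ), Real.exp (-a * s) = 1 / a := by
    simpa [neg_div] using integral_exp_mul_Ioi (neg_neg_of_pos ha) 0
  have hθ : xStat a b (shiftPath t w)
      = -(a * b) * (Real.exp (a * t) * (∫ s in Ioi t, g s) - w t / a) := by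
    simp only [xStat, shiftPath, mul_sub]
    rw [integral_sub hshift_int ((exp_neg_integrableOn_Ioi 0 ha).mul_const _), integral_mul_const,
      hshift, hkernel]
    ring
  have hIoi_t : ∫ s in Ioi t, g s = (∫ s in Ioi 0, g s) - ∫ s in 0..t, g s := by
    linarith [intervalIntegral.integral_Ioi_sub_Ioi' (hint 0) (hint t)]
  rw [hθ, hIoi_t]
  simp only [phiSol, xStat, g]
  field_simp
  ring

lemma psiSol_eq_phiSol_neg (a b t : ℝ) (w : ℝ → ℝ) (y : ℝ) :
    psiSol a b t w y = phiSol a b (-t) (fun s => w (-s)) y := by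
  have hrev : ∫ s in 0..-t, Real.exp (-a * s) * w (-s) = -∫ s in 0..t, Real.exp (a * s) * w s := by
    simp_rw [neg_mul, ← mul_neg]
    rw [intervalIntegral.integral_comp_neg (fun s => Real.exp (a * s) * w s), neg_neg, neg_zero,
      intervalIntegral.integral_symm]
  simp only [psiSol, phiSol, hrev, neg_neg]
  ring_nf

lemma yStat_eq_xStat_neg (a b : ℝ) (w : ℝ → ℝ) : yStat a b w = xStat a b (fun s => w (-s)) := by
  simp_rw [yStat, xStat, neg_mul, ← mul_neg]
  rw [integral_comp_neg_Ioi 0 (fun s => Real.exp (a * s) * w s), neg_zero,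
    integral_Iic_eq_integral_Iio]

lemma shiftPath_comp_neg (t : ℝ) (w : ℝ → ℝ) :
    (fun s => shiftPath t w (-s)) = shiftPath (-t) (fun s => w (-s)) := by
  ext s
  simp only [shiftPath, neg_add, neg_neg]

lemma psiSol_bijective (a b t : ℝ) (w : ℝ → ℝ) : Bijective (psiSol a b t w) := by
  rw [funext (psiSol_eq_phiSol_neg a b t w)]
  exact phiSol_bijective a b (-t) _

lemma psiSol_yStat_eq_yStat_shiftPath {a : ℝ} (ha : 0 < a) (b : ℝ) {w : ℝ → ℝ}
    (hint : ∀ c, IntegrableOn (fun s => Real.exp (-a * s) * w (-s)) (Ioi c)) (t : ℝ) :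
    psiSol a b t w (yStat a b w) = yStat a b (shiftPath t w) := by
  rw [psiSol_eq_phiSol_neg, yStat_eq_xStat_neg, yStat_eq_xStat_neg, shiftPath_comp_neg,
    phiSol_xStat_eq_xStat_shiftPath ha b hint]

theorem noisy_saddle_manifolds_invariant_general
    (a₁ a₂ : ℝ) (ha₁ : 0 < a₁) (ha₂ : 0 < a₂) (b₁ b₂ : ℝ)
    (w₁ w₂ : ℝ → ℝ) (hw₁ : Continuous w₁)
    (hw₂ : Continuous w₂)
    (C₁ : ℝ) (hg₁ : ∀ s : ℝ, |w₁ s| ≤ C₁ * (1 + |s|))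
    (C₂ : ℝ) (hg₂ : ∀ s : ℝ, |w₂ s| ≤ C₂ * (1 + |s|)) :
    ∀ t : ℝ,
      Set.BijOn (fun p : ℝ × ℝ => (phiSol a₁ b₁ t w₁ p.1, psiSol a₂ b₂ t w₂ p.2))
        {p : ℝ × ℝ | p.1 = xStat a₁ b₁ w₁}
        {p : ℝ × ℝ | p.1 = xStat a₁ b₁ (shiftPath t w₁)} ∧
      Set.BijOn (fun p : ℝ × ℝ => (phiSol a₁ b₁ t w₁ p.1, psiSol a₂ b₂ t w₂ p.2))
        {p : ℝ × ℝ | p.2 = yStat a₂ b₂ w₂}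
        {p : ℝ × ℝ | p.2 = yStat a₂ b₂ (shiftPath t w₂)} := by
  intro t
  have hint₁ := integrableOn_Ioi_exp_neg_mul_mul (half_lt_self ha₁) hw₁
    (isBigO_exp_mul_of_abs_le_linear (half_pos ha₁) hg₁)
  have hint₂ := integrableOn_Ioi_exp_neg_mul_mul (half_lt_self ha₂) (hw₂.comp continuous_neg)
    (isBigO_exp_mul_of_abs_le_linear (C := C₂) (half_pos ha₂) fun s => by simpa using hg₂ (-s))
  exact ⟨bijOn_prodMap_fst_eq (phiSol_xStat_eq_xStat_shiftPath ha₁ b₁ hint₁ t)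
      (psiSol_bijective a₂ b₂ t w₂),
    bijOn_prodMap_snd_eq (psiSol_yStat_eq_yStat_shiftPath ha₂ b₂ hint₂ t)
      (phiSol_bijective a₁ b₁ t w₁)⟩

/-- **Invariance of the stable and unstable manifolds of the stationary orbit of the
noisy saddle.** For every `t : ℝ`, the joint pathwise solution operator
`Φ(t, (x,y)) = (φ_{a₁,b₁}(t, w¹, x), ψ_{a₂,b₂}(t, w², y))` maps the stable manifold
`𝒮(w) = {(x,y) : x = x̃(w¹)}` bijectively onto `𝒮(θ_t w)`, and the unstable manifold
`𝒰(w) = {(x,y) : y = ỹ(w²)}` bijectively onto `𝒰(θ_t w)`. -/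
theorem noisy_saddle_manifolds_invariant
    (a₁ a₂ : ℝ) (ha₁ : 0 < a₁) (ha₂ : 0 < a₂) (b₁ b₂ : ℝ)
    (w₁ w₂ : ℝ → ℝ) (hw₁ : Continuous w₁) (hw₁0 : w₁ 0 = 0)
    (hw₂ : Continuous w₂) (hw₂0 : w₂ 0 = 0)
    (C₁ : ℝ) (hC₁ : 0 ≤ C₁) (hg₁ : ∀ s : ℝ, |w₁ s| ≤ C₁ * (1 + |s|))
    (C₂ : ℝ) (hC₂ : 0 ≤ C₂) (hg₂ : ∀ s : ℝ, |w₂ s| ≤ C₂ * (1 + |s|)) :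
    ∀ t : ℝ,
      Set.BijOn (fun p : ℝ × ℝ => (phiSol a₁ b₁ t w₁ p.1, psiSol a₂ b₂ t w₂ p.2))
        {p : ℝ × ℝ | p.1 = xStat a₁ b₁ w₁}
        {p : ℝ × ℝ | p.1 = xStat a₁ b₁ (shiftPath t w₁)} ∧
      Set.BijOn (fun p : ℝ × ℝ => (phiSol a₁ b₁ t w₁ p.1, psiSol a₂ b₂ t w₂ p.2))
        {p : ℝ × ℝ | p.2 = yStat a₂ b₂ w₂}
        {p : ℝ × ℝ | p.2 = yStat a₂ b₂ (shiftPath t w₂)} :=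
  noisy_saddle_manifolds_invariant_general a₁ a₂ ha₁ ha₂ b₁ b₂ w₁ w₂ hw₁ hw₂ C₁ hg₁ C₂ hg₂
end

section
/- Fix a > 0, b ∈ ℝ, a path w, a step Δt > 0, an exponent p ∈ (0, 1), and N ∈ ℕ with N ≥ 1. Set tᵢ = i Δt for integers i, g(t) = b w(t) + a b e^{a t} ∫₀ᵗ e^{−a s} w(s) ds, and for x₀ ∈ ℝ let X_t(x₀) = e^{a t} x₀ + g(t) be the pathwise solution of dX = aX dt + b dW with X₀ = x₀. Then the x-component of the stochastic Lagrangian descriptor, F(x₀) = Σ_{i=−N}^{N−1} |X_{t_{i+1}}(x₀) − X_{t_i}(x₀)|^{p}, is differentiable at every x₀ outside the finite set { sᵢ : −N ≤ i ≤ N−1 } and non-differentiable at each sᵢ, where sᵢ = −( g(t_{i+1}) − g(t_i) ) / ( e^{a t_{i+1}} − e^{a t_i} ). -/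
/-!
Each increment `X_{t_{i+1}} - X_{tᵢ}` equals `cᵢ (x₀ - sᵢ)` with
`cᵢ = e^{a t_{i+1}} - e^{a tᵢ} ≠ 0`, so `F(x₀) = Σ |cᵢ|^p |x₀ - sᵢ|^p`. Away from the `sᵢ`
every term is smooth. At `sᵢ` the terms with `sⱼ = sᵢ` add up to `C |x₀ - sᵢ|^p` with `C > 0`,
whose right slopes `C x^{p-1}` blow up because `p < 1`, while the remaining terms are smooth
there.
-/

open MeasureTheory Filter Topology

/-- The path-dependent part `g(t) = b w(t) + a b e^{a t} ∫₀ᵗ e^{-a s} w(s) ds` of the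
pathwise solution of `dX = aX dt + b dW`. -/
noncomputable def gPart (a b : ℝ) (w : ℝ → ℝ) (t : ℝ) : ℝ :=
  b * w t + a * b * Real.exp (a * t) * ∫ s in (0 : ℝ)..t, Real.exp (-a * s) * w s

/-- The pathwise solution `X_t(x₀) = e^{a t} x₀ + g(t)` of `dX = aX dt + b dW` with
`X₀ = x₀`. -/
noncomputable def Xsol (a b : ℝ) (w : ℝ → ℝ) (x₀ t : ℝ) : ℝ :=
  Real.exp (a * t) * x₀ + gPart a b w t

/-- The singular point of the `i`-th increment of the stochastic Lagrangian descriptor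
on the uniform grid `tᵢ = i Δt`:
`sᵢ = -(g(t_{i+1}) - g(tᵢ)) / (e^{a t_{i+1}} - e^{a tᵢ})`. -/
noncomputable def singPt (a b : ℝ) (w : ℝ → ℝ) (Δt : ℝ) (i : ℤ) : ℝ :=
  -(gPart a b w (((i : ℝ) + 1) * Δt) - gPart a b w ((i : ℝ) * Δt)) /
    (Real.exp (a * (((i : ℝ) + 1) * Δt)) - Real.exp (a * ((i : ℝ) * Δt)))

lemma not_differentiableAt_abs_rpow_zero {p : ℝ} (hp0 : 0 < p) (hp1 : p < 1) :
    ¬ DifferentiableAt ℝ (fun x : ℝ => |x| ^ p) 0 := by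
  intro h
  have h_slope : Tendsto (slope (fun x : ℝ => |x| ^ p) 0) (𝓝[>] 0)
      (𝓝 (deriv (fun x : ℝ => |x| ^ p) 0)) :=
    (hasDerivAt_iff_tendsto_slope.1 h.hasDerivAt).mono_left
      (nhdsWithin_mono _ fun x hx => ne_of_gt hx)
  have h_pow : Tendsto (fun x : ℝ => x ^ (1 - p)) (𝓝[>] 0) (𝓝[>] 0) := by
    apply tendsto_nhdsWithin_of_tendsto_nhds_of_eventually_within
    · have := (Real.continuousAt_rpow_const 0 (1 - p) (Or.inr (by linarith))).tendsto
      rw [Real.zero_rpow (by linarith : (1 : ℝ) - p ≠ 0)] at this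
      exact this.mono_left nhdsWithin_le_nhds
    · filter_upwards [self_mem_nhdsWithin] with x hx
      exact Real.rpow_pos_of_pos hx _
  -- on `x > 0` the slope of `|x|^p` at `0` is `x^(p-1) = (x^(1-p))⁻¹ → ∞`
  have h_slope_top : Tendsto (slope (fun x : ℝ => |x| ^ p) 0) (𝓝[>] 0) atTop := by
    refine h_pow.inv_tendsto_nhdsGT_zero.congr' ?_
    filter_upwards [self_mem_nhdsWithin] with x (hx : 0 < x)
    rw [Pi.inv_apply, ← Real.rpow_neg hx.le, neg_sub, slope_def_field, abs_of_pos hx, abs_zero,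
      Real.zero_rpow hp0.ne', sub_zero, sub_zero, Real.rpow_sub_one hx.ne']
  exact not_tendsto_nhds_of_tendsto_atTop h_slope_top _ h_slope

lemma not_differentiableAt_const_mul_abs_sub_rpow {p C s : ℝ} (hp0 : 0 < p) (hp1 : p < 1)
    (hC : C ≠ 0) : ¬ DifferentiableAt ℝ (fun y : ℝ => C * |y - s| ^ p) s := by
  intro h
  have h_abs : DifferentiableAt ℝ (fun y : ℝ => |y - s| ^ p) s := by
    simpa [inv_mul_cancel_left₀ hC] using h.const_mul C⁻¹
  refine not_differentiableAt_abs_rpow_zero hp0 hp1 ?_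
  simpa using (differentiableAt_comp_sub_const (f := fun x : ℝ => |x| ^ p)).1 h_abs

section SumAbsRpow

variable {ι : Type*} {T : Finset ι} {c s : ι → ℝ} {p : ℝ}

lemma differentiableAt_sum_abs_mul_sub_rpow {x : ℝ} (hc : ∀ j ∈ T, c j ≠ 0)
    (hx : x ∉ s '' T) :
    DifferentiableAt ℝ (fun y : ℝ => ∑ j ∈ T, |c j * (y - s j)| ^ p) x := by
  refine DifferentiableAt.fun_sum fun j hj => ?_
  have hne : c j * (x - s j) ≠ 0 :=
    mul_ne_zero (hc j hj) (sub_ne_zero.2 fun h => hx ⟨j, hj, h.symm⟩)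
  exact ((by fun_prop : DifferentiableAt ℝ (fun y => c j * (y - s j)) x).abs hne).rpow_const
    (Or.inl (abs_ne_zero.2 hne))

lemma not_differentiableAt_sum_abs_mul_sub_rpow (hp0 : 0 < p) (hp1 : p < 1)
    (hc : ∀ j ∈ T, c j ≠ 0) {i : ι} (hi : i ∈ T) :
    ¬ DifferentiableAt ℝ (fun y : ℝ => ∑ j ∈ T, |c j * (y - s j)| ^ p) (s i) := by
  classical
  set S := T.filter (fun j => s j = s i)
  set C := ∑ j ∈ S, |c j| ^ p
  have hC : C ≠ 0 := by
    refine (Finset.sum_pos' (fun j _ => by positivity) ⟨i, ?_, ?_⟩).ne'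
    · exact Finset.mem_filter.2 ⟨hi, rfl⟩
    · exact Real.rpow_pos_of_pos (abs_pos.2 (hc i hi)) p
  have h_split : (fun y : ℝ => ∑ j ∈ T, |c j * (y - s j)| ^ p) = fun y =>
      C * |y - s i| ^ p + ∑ j ∈ T.filter (fun j => s j ≠ s i), |c j * (y - s j)| ^ p := by
    funext y
    rw [← Finset.sum_filter_add_sum_filter_not T (fun j => s j = s i), Finset.sum_mul]
    congr 1
    refine Finset.sum_congr rfl fun j hj => ?_
    rw [(Finset.mem_filter.1 hj).2, abs_mul, Real.mul_rpow (abs_nonneg _) (abs_nonneg _)]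
  have h_regular : DifferentiableAt ℝ
      (fun y => ∑ j ∈ T.filter (fun j => s j ≠ s i), |c j * (y - s j)| ^ p) (s i) :=
    differentiableAt_sum_abs_mul_sub_rpow (fun j hj => hc j (Finset.mem_filter.1 hj).1)
      fun ⟨j, hj, hji⟩ => (Finset.mem_filter.1 hj).2 hji
  rw [h_split, h_regular.fun_add_iff_left]
  exact not_differentiableAt_const_mul_abs_sub_rpow hp0 hp1 hC

end SumAbsRpow

lemma exp_mul_succ_sub_exp_mul_ne_zero {a Δt : ℝ} (ha : 0 < a) (hΔt : 0 < Δt) (i : ℤ) :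
    Real.exp (a * (((i : ℝ) + 1) * Δt)) - Real.exp (a * ((i : ℝ) * Δt)) ≠ 0 :=
  sub_ne_zero.2 (Real.exp_lt_exp.2 (by nlinarith)).ne'

lemma Xsol_succ_sub_Xsol {a Δt : ℝ} (ha : 0 < a) (hΔt : 0 < Δt) (b : ℝ) (w : ℝ → ℝ) (i : ℤ)
    (y : ℝ) :
    Xsol a b w y (((i : ℝ) + 1) * Δt) - Xsol a b w y ((i : ℝ) * Δt) =
      (Real.exp (a * (((i : ℝ) + 1) * Δt)) - Real.exp (a * ((i : ℝ) * Δt))) *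
        (y - singPt a b w Δt i) := by
  have hne := exp_mul_succ_sub_exp_mul_ne_zero ha hΔt i
  rw [singPt, mul_sub, mul_div_cancel₀ _ hne]
  simp only [Xsol]
  ring

theorem SLD_x_component_singularities_general
    (a : ℝ) (ha : 0 < a) (b : ℝ) (w : ℝ → ℝ)
    (Δt : ℝ) (hΔt : 0 < Δt) (p : ℝ) (hp0 : 0 < p) (hp1 : p < 1)
    (N : ℕ) :
    (∀ x₀ : ℝ,
      x₀ ∉ (fun i : ℤ => singPt a b w Δt i) '' Set.Icc (-(N : ℤ)) ((N : ℤ) - 1) →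
      DifferentiableAt ℝ
        (fun y : ℝ => ∑ i ∈ Finset.Icc (-(N : ℤ)) ((N : ℤ) - 1),
          |Xsol a b w y (((i : ℝ) + 1) * Δt) - Xsol a b w y ((i : ℝ) * Δt)| ^ p) x₀) ∧
    (∀ i ∈ Finset.Icc (-(N : ℤ)) ((N : ℤ) - 1),
      ¬ DifferentiableAt ℝ
        (fun y : ℝ => ∑ j ∈ Finset.Icc (-(N : ℤ)) ((N : ℤ) - 1),
          |Xsol a b w y (((j : ℝ) + 1) * Δt) - Xsol a b w y ((j : ℝ) * Δt)| ^ p)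
        (singPt a b w Δt i)) := by
  have hc := fun j (_ : j ∈ Finset.Icc (-(N : ℤ)) ((N : ℤ) - 1)) =>
    exp_mul_succ_sub_exp_mul_ne_zero ha hΔt j
  simp only [Xsol_succ_sub_Xsol ha hΔt]
  refine ⟨fun x₀ hx₀ => differentiableAt_sum_abs_mul_sub_rpow hc ?_,
    fun i hi => not_differentiableAt_sum_abs_mul_sub_rpow hp0 hp1 hc hi⟩
  rwa [Finset.coe_Icc]

/-- **Singularities of the x-component of the stochastic Lagrangian descriptor of the
noisy saddle.** For `a > 0`, a path `w`, a step `Δt > 0`, `p ∈ (0, 1)` and `N ≥ 1`, the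
function `F(x₀) = Σ_{i=-N}^{N-1} |X_{t_{i+1}}(x₀) - X_{tᵢ}(x₀)|^p` is differentiable at
every `x₀` outside the finite set `{sᵢ : -N ≤ i ≤ N-1}` and non-differentiable at
each `sᵢ`. -/
theorem SLD_x_component_singularities
    (a : ℝ) (ha : 0 < a) (b : ℝ) (w : ℝ → ℝ) (hw : Continuous w) (hw0 : w 0 = 0)
    (Δt : ℝ) (hΔt : 0 < Δt) (p : ℝ) (hp0 : 0 < p) (hp1 : p < 1)
    (N : ℕ) (hN : 1 ≤ N) :
    (∀ x₀ : ℝ,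
      x₀ ∉ (fun i : ℤ => singPt a b w Δt i) '' Set.Icc (-(N : ℤ)) ((N : ℤ) - 1) →
      DifferentiableAt ℝ
        (fun y : ℝ => ∑ i ∈ Finset.Icc (-(N : ℤ)) ((N : ℤ) - 1),
          |Xsol a b w y (((i : ℝ) + 1) * Δt) - Xsol a b w y ((i : ℝ) * Δt)| ^ p) x₀) ∧
    (∀ i ∈ Finset.Icc (-(N : ℤ)) ((N : ℤ) - 1),
      ¬ DifferentiableAt ℝ
        (fun y : ℝ => ∑ j ∈ Finset.Icc (-(N : ℤ)) ((N : ℤ) - 1),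
          |Xsol a b w y (((j : ℝ) + 1) * Δt) - Xsol a b w y ((j : ℝ) * Δt)| ^ p)
        (singPt a b w Δt i)) :=
  SLD_x_component_singularities_general a ha b w Δt hΔt p hp0 hp1 N
end
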